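/- arXiv:1810.07627 — 2 statements merged into one kernel-verified Lean document; each statement's English description precedes it below -/
import Mathlib

section
/- If G₁ and G₂ are finite groups whose enhanced power graphs are isomorphic, then for every positive integer m, G₁ and G₂ have the same number of elements of order m. -/
open SimpleGraph

/-- The enhanced power graph of a group. -/
def enhancedPowerGraph (G : Type*) [Group G] : SimpleGraph G where
  Adj x y := x ≠ y ∧ ∃ z : G, x ∈ Subgroup.zpowers z ∧ y ∈ Subgroup.zpowers z
  symm := by refine ⟨?_⟩; rintro x y ⟨h, z, hx, hy⟩; exact ⟨h.symm, z, hy, hx⟩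
  loopless := by refine ⟨?_⟩; rintro x ⟨h, -⟩; exact h rfl

/-- The (undirected) power graph of a group. -/
def powerGraph (G : Type*) [Group G] : SimpleGraph G where
  Adj x y := x ≠ y ∧ (x ∈ Subgroup.zpowers y ∨ y ∈ Subgroup.zpowers x)
  symm := by refine ⟨?_⟩; rintro x y ⟨h, hz⟩; exact ⟨h.symm, hz.symm⟩
  loopless := by refine ⟨?_⟩; rintro x ⟨h, -⟩; exact h rfl

/-- The strong product of two simple graphs. -/
def strongProd {α β : Type*} (Γ : SimpleGraph α) (Δ : SimpleGraph β) :
    SimpleGraph (α × β) where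
  Adj p q := (p.1 = q.1 ∧ Δ.Adj p.2 q.2) ∨ (Γ.Adj p.1 q.1 ∧ p.2 = q.2) ∨
    (Γ.Adj p.1 q.1 ∧ Δ.Adj p.2 q.2)
  symm := by
    refine ⟨?_⟩
    rintro ⟨a, b⟩ ⟨c, d⟩ (⟨h1, h2⟩ | ⟨h1, h2⟩ | ⟨h1, h2⟩)
    · exact Or.inl ⟨h1.symm, h2.symm⟩
    · exact Or.inr (Or.inl ⟨h1.symm, h2.symm⟩)
    · exact Or.inr (Or.inr ⟨h1.symm, h2.symm⟩)
  loopless := by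
    refine ⟨?_⟩
    rintro ⟨a, b⟩ (⟨-, h⟩ | ⟨h, -⟩ | ⟨h, -⟩) <;> exact h.ne rfl

/-- The automorphism group of a simple graph, as a subgroup of permutations. -/
def graphAut {V : Type*} (Γ : SimpleGraph V) : Subgroup (Equiv.Perm V) where
  carrier := {σ | ∀ x y, Γ.Adj (σ x) (σ y) ↔ Γ.Adj x y}
  one_mem' := fun _ _ => Iff.rfl
  mul_mem' := by
    intro σ τ hσ hτ x y
    simpa [Equiv.Perm.mul_apply] using (hσ (τ x) (τ y)).trans (hτ x y)
  inv_mem' := by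
    intro σ hσ x y
    simpa using (hσ (σ⁻¹ x) (σ⁻¹ y)).symm

/-- A subgroup is maximal cyclic if it is maximal among cyclic subgroups. -/
def IsMaxCyclic {G : Type*} [Group G] (C : Subgroup G) : Prop :=
  Maximal (fun K : Subgroup G => ∃ g : G, K = Subgroup.zpowers g) C

/-- The closed neighborhood of a vertex. -/
def closedNbhd {V : Type*} (Γ : SimpleGraph V) (x : V) : Set V :=
  Γ.neighborSet x ∪ {x}

/-!
In the enhanced power graph of a finite group the closed neighbourhood of `x` is the union of
the cyclic subgroups containing `x`, so the minimal closed neighbourhoods are exactly the maximal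
cyclic subgroups. A graph isomorphism `e` therefore carries maximal cyclic subgroups onto maximal
cyclic subgroups, and intersections of them onto intersections of the same size.

Send a cyclic subgroup `C` of order `m`, lying in a maximal cyclic `M`, to the unique subgroup of
order `m` of the cyclic group `e '' M`. This does not depend on `M`: if `C ≤ M₁ ⊓ M₂`, then
`e '' (M₁ ⊓ M₂)` is cyclic of order divisible by `m`, and its subgroup of order `m` is the one of
both `e '' M₁` and `e '' M₂`. Applied to `e.symm` this gives the inverse, so `G₁` and `G₂` have
equally many cyclic subgroups of order `m`. Every element of order `m` generates exactly one of
them, and each of them has `φ m` generators.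
-/

open Subgroup

theorem Set.ncard_eq_of_biTotal_of_biUnique {α β : Type*} {s : Set α} {t : Set β}
    (R : α → β → Prop)
    (hs : ∀ a ∈ s, ∃ b ∈ t, R a b) (ht : ∀ b ∈ t, ∃ a ∈ s, R a b)
    (hR : ∀ a ∈ s, ∀ b₁ ∈ t, ∀ b₂ ∈ t, R a b₁ → R a b₂ → b₁ = b₂)
    (hR' : ∀ a₁ ∈ s, ∀ a₂ ∈ s, ∀ b ∈ t, R a₁ b → R a₂ b → a₁ = a₂) :
    s.ncard = t.ncard := by
  choose f hft hf using hs
  refine Set.ncard_congr f hft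
    (fun a₁ a₂ h₁ h₂ h => hR' a₁ h₁ a₂ h₂ _ (hft a₁ h₁) (hf a₁ h₁) (h ▸ hf a₂ h₂)) ?_
  intro b hb
  obtain ⟨a, ha, hab⟩ := ht b hb
  exact ⟨a, ha, hR a ha _ (hft a ha) b hb (hf a ha) hab⟩

section Cyclic

variable {α : Type*} [Group α] [Finite α] [IsCyclic α]

theorem IsCyclic.coe_subgroup_eq_setOf_pow_card_eq_one (H : Subgroup α) :
    (H : Set α) = {a | a ^ Nat.card H = 1} := by
  classical
  have : Fintype α := Fintype.ofFinite α
  refine Set.eq_of_subset_of_ncard_le (fun x hx => ?_) ?_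
  · have := orderOf_dvd_natCard (⟨x, hx⟩ : H)
    rwa [Subgroup.orderOf_mk, orderOf_dvd_iff_pow_eq_one] at this
  · have := IsCyclic.card_pow_eq_one_le (α := α) (n := Nat.card H) Nat.card_pos
    rwa [← Set.toFinset_ofPred, ← Set.ncard_eq_toFinset_card', ← SetLike.coe_sort_coe,
      Nat.card_coe_set_eq] at this

theorem IsCyclic.subgroup_eq_of_card_eq {H₁ H₂ : Subgroup α} (h : Nat.card H₁ = Nat.card H₂) :
    H₁ = H₂ :=
  SetLike.coe_injective <| by
    rw [coe_subgroup_eq_setOf_pow_card_eq_one H₁, coe_subgroup_eq_setOf_pow_card_eq_one H₂, h]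

end Cyclic

namespace Subgroup

variable {G : Type*} [Group G]

theorem eq_of_le_of_card_eq_of_isCyclic {H₁ H₂ K : Subgroup G} [IsCyclic K] [Finite K]
    (h₁ : H₁ ≤ K) (h₂ : H₂ ≤ K) (h : Nat.card H₁ = Nat.card H₂) : H₁ = H₂ := by
  have key : H₁.subgroupOf K = H₂.subgroupOf K := IsCyclic.subgroup_eq_of_card_eq <| by
    rw [Nat.card_congr (subgroupOfEquivOfLe h₁).toEquiv,
      Nat.card_congr (subgroupOfEquivOfLe h₂).toEquiv, h]
  rwa [subgroupOf_inj, inf_of_le_left h₁, inf_of_le_left h₂] at key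

theorem exists_le_card_eq_of_isCyclic {K : Subgroup G} [IsCyclic K] [Finite K] {m : ℕ}
    (hm : m ∣ Nat.card K) : ∃ H ≤ K, Nat.card H = m := by
  obtain ⟨g, rfl⟩ := (K.isCyclic_iff_exists_zpowers_eq_top).mp ‹_›
  have hg : orderOf g ≠ 0 := by rw [← Nat.card_zpowers]; exact Nat.card_pos.ne'
  rw [Nat.card_zpowers] at hm
  exact ⟨zpowers (g ^ (orderOf g / m)), zpowers_le_of_mem (pow_mem (mem_zpowers g) _),
    by rw [Nat.card_zpowers, orderOf_pow_orderOf_div hg hm]⟩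

theorem card_generators_eq_totient (C : Subgroup G) [IsCyclic C] [Finite C] :
    Nat.card {x : G // zpowers x = C} = (Nat.card C).totient := by
  classical
  have : Fintype C := Fintype.ofFinite C
  have himage : {x : G | zpowers x = C} = Subtype.val '' {y : C | orderOf y = Nat.card C} := by
    ext x
    constructor
    · rintro rfl
      refine ⟨⟨x, mem_zpowers x⟩, ?_, rfl⟩
      rw [Set.mem_ofPred_eq, Subgroup.orderOf_mk, Nat.card_zpowers]
    · rintro ⟨y, hy, rfl⟩
      exact eq_of_le_of_card_ge (zpowers_le_of_mem y.2)
        (by rw [Nat.card_zpowers, Subgroup.orderOf_coe, hy])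
  rw [← Set.coe_ofPred, Nat.card_coe_set_eq, himage,
    Set.ncard_image_of_injective _ Subtype.val_injective, Set.ncard_eq_toFinset_card',
    Set.toFinset_ofPred, IsCyclic.card_orderOf_eq_totient Nat.card_eq_fintype_card.dvd]

end Subgroup

def cyclicSubgroupsOfCard (G : Type*) [Group G] (m : ℕ) : Set (Subgroup G) :=
  {C | IsCyclic C ∧ Nat.card C = m}

theorem card_orderOf_eq_ncard_mul_totient {G : Type*} [Group G] [Finite G] (m : ℕ) :
    Nat.card {x : G | orderOf x = m} = (cyclicSubgroupsOfCard G m).ncard * m.totient := by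
  have : Fintype (cyclicSubgroupsOfCard G m) := Fintype.ofFinite _
  let byGeneratedSubgroup :
      {x : G | orderOf x = m} ≃ Σ C : cyclicSubgroupsOfCard G m, {x : G // zpowers x = C} :=
    { toFun := fun x => ⟨⟨zpowers x, inferInstance, by rw [Nat.card_zpowers, x.2]⟩, x, rfl⟩
      invFun := fun C => ⟨C.2, by rw [Set.mem_ofPred_eq, ← Nat.card_zpowers, C.2.2, C.1.2.2]⟩
      left_inv := fun _ => rfl
      right_inv := fun ⟨_, _, hx⟩ => Sigma.subtype_ext (Subtype.ext hx) rfl }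
  have hfiber (C : cyclicSubgroupsOfCard G m) :
      Nat.card {x : G // zpowers x = C} = m.totient := by
    have := C.2.1
    rw [card_generators_eq_totient, C.2.2]
  rw [Nat.card_congr byGeneratedSubgroup, Nat.card_sigma, Finset.sum_congr rfl fun C _ => hfiber C,
    Finset.sum_const, smul_eq_mul, Finset.card_univ, ← Nat.card_eq_fintype_card,
    Nat.card_coe_set_eq]

namespace SimpleGraph.Iso

variable {V W : Type*} {Γ : SimpleGraph V} {Δ : SimpleGraph W} (e : Γ ≃g Δ)

theorem image_closedNbhd (x : V) : e '' closedNbhd Γ x = closedNbhd Δ (e x) := by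
  rw [closedNbhd, closedNbhd, Set.image_union, Set.image_singleton]
  congr 1
  ext y
  constructor
  · rintro ⟨z, hz, rfl⟩
    exact e.map_adj_iff.mpr hz
  · intro hy
    exact ⟨e.symm y, e.map_adj_iff.mp (by rwa [e.apply_symm_apply]), e.apply_symm_apply y⟩

theorem minimal_image_closedNbhd {s : Set V} (hs : Minimal (· ∈ Set.range (closedNbhd Γ)) s) :
    Minimal (· ∈ Set.range (closedNbhd Δ)) (e '' s) := by
  have hrange : Set.image e '' Set.range (closedNbhd Γ) = Set.range (closedNbhd Δ) := by
    rw [← Set.range_comp, ← e.surjective.range_comp]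
    exact congrArg Set.range (funext e.image_closedNbhd)
  rw [← hrange]
  exact minimal_mem_image_monotone (fun _ _ _ _ => Set.image_subset_image_iff e.injective) hs

end SimpleGraph.Iso

section EnhancedPowerGraph

variable {G : Type*} [Group G]

theorem mem_closedNbhd_enhancedPowerGraph {x y : G} :
    y ∈ closedNbhd (enhancedPowerGraph G) x ↔ ∃ z, x ∈ zpowers z ∧ y ∈ zpowers z := by
  constructor
  · rintro (⟨-, h⟩ | rfl)
    · exact h
    · exact ⟨y, mem_zpowers y, mem_zpowers y⟩
  · intro h
    by_cases hxy : x = y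
    · exact Or.inr hxy.symm
    · exact Or.inl ⟨hxy, h⟩

theorem IsMaxCyclic.isCyclic {M : Subgroup G} (hM : IsMaxCyclic M) : IsCyclic M := by
  obtain ⟨g, rfl⟩ := hM.prop
  infer_instance

theorem IsMaxCyclic.coe_subset_closedNbhd {M : Subgroup G} (hM : IsMaxCyclic M) {x : G}
    (hx : x ∈ M) : (M : Set G) ⊆ closedNbhd (enhancedPowerGraph G) x := by
  obtain ⟨g, rfl⟩ := hM.prop
  exact fun y hy => mem_closedNbhd_enhancedPowerGraph.mpr ⟨g, hx, hy⟩

theorem IsMaxCyclic.closedNbhd_eq {g : G} (hM : IsMaxCyclic (zpowers g)) :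
    closedNbhd (enhancedPowerGraph G) g = zpowers g := by
  refine subset_antisymm (fun y hy => ?_) (hM.coe_subset_closedNbhd (mem_zpowers g))
  obtain ⟨z, hgz, hyz⟩ := mem_closedNbhd_enhancedPowerGraph.mp hy
  exact hM.2 ⟨z, rfl⟩ (zpowers_le_of_mem hgz) hyz

theorem exists_isMaxCyclic_le [Finite G] (x : G) : ∃ M, IsMaxCyclic M ∧ zpowers x ≤ M := by
  obtain ⟨M, hle, hM⟩ :=
    (Set.toFinite {K : Subgroup G | ∃ g, K = zpowers g}).exists_le_maximal ⟨x, rfl⟩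
  exact ⟨M, hM, hle⟩

theorem minimal_closedNbhd_iff [Finite G] {s : Set G} :
    Minimal (· ∈ Set.range (closedNbhd (enhancedPowerGraph G))) s ↔
      ∃ M : Subgroup G, IsMaxCyclic M ∧ s = M := by
  constructor
  · rintro ⟨⟨x, rfl⟩, hmin⟩
    obtain ⟨M, hM, hxM⟩ := exists_isMaxCyclic_le x
    have hMx := hM.coe_subset_closedNbhd (hxM (mem_zpowers x))
    obtain ⟨g, rfl⟩ := hM.prop
    rw [← hM.closedNbhd_eq] at hMx
    exact ⟨_, hM, hM.closedNbhd_eq ▸ subset_antisymm (hmin ⟨g, rfl⟩ hMx) hMx⟩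
  · rintro ⟨M, hM, rfl⟩
    obtain ⟨g, rfl⟩ := hM.prop
    refine ⟨⟨g, hM.closedNbhd_eq⟩, ?_⟩
    rintro _ ⟨y, rfl⟩ hy
    exact hM.coe_subset_closedNbhd (hy (Or.inr rfl))

end EnhancedPowerGraph

theorem exists_isMaxCyclic_coe_eq_image {G₁ G₂ : Type*} [Group G₁] [Group G₂] [Finite G₁]
    [Finite G₂] (e : enhancedPowerGraph G₁ ≃g enhancedPowerGraph G₂) {M : Subgroup G₁}
    (hM : IsMaxCyclic M) : ∃ M' : Subgroup G₂, IsMaxCyclic M' ∧ (M' : Set G₂) = e '' M := by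
  obtain ⟨M', hM', h⟩ := minimal_closedNbhd_iff.mp
    (e.minimal_image_closedNbhd (minimal_closedNbhd_iff.mpr ⟨M, hM, rfl⟩))
  exact ⟨M', hM', h.symm⟩

section Transport

variable {G₁ G₂ : Type*} [Group G₁] [Group G₂]

theorem card_eq_of_coe_eq_image (e : G₁ ≃ G₂) {H : Subgroup G₁} {H' : Subgroup G₂}
    (h : (H' : Set G₂) = e '' H) : Nat.card H' = Nat.card H := by
  rw [← SetLike.coe_sort_coe, h, Nat.card_image_of_injective e.injective, SetLike.coe_sort_coe]

def IsCyclicTransport (e : G₁ ≃ G₂) (C : Subgroup G₁) (C' : Subgroup G₂) : Prop :=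
  ∃ (M : Subgroup G₁) (M' : Subgroup G₂), IsCyclic M ∧ IsCyclic M' ∧ (M' : Set G₂) = e '' M ∧
    C ≤ M ∧ C' ≤ M'

theorem IsCyclicTransport.symm {e : G₁ ≃ G₂} {C : Subgroup G₁} {C' : Subgroup G₂}
    (h : IsCyclicTransport e C C') : IsCyclicTransport e.symm C' C := by
  obtain ⟨M, M', hM, hM', he, hC, hC'⟩ := h
  exact ⟨M', M, hM', hM, by rw [he, e.symm_image_image], hC', hC⟩

theorem IsCyclicTransport.eq [Finite G₂] {e : G₁ ≃ G₂} {C : Subgroup G₁} {C₁ C₂ : Subgroup G₂}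
    (h₁ : IsCyclicTransport e C C₁) (h₂ : IsCyclicTransport e C C₂)
    (hC₁ : Nat.card C₁ = Nat.card C) (hC₂ : Nat.card C₂ = Nat.card C) : C₁ = C₂ := by
  obtain ⟨M₁, M₁', -, hM₁', he₁, hCM₁, hCM₁'⟩ := h₁
  obtain ⟨M₂, M₂', -, hM₂', he₂, hCM₂, hCM₂'⟩ := h₂
  have he : ((M₁' ⊓ M₂' : Subgroup G₂) : Set G₂) = e '' (M₁ ⊓ M₂ : Subgroup G₁) := by
    rw [coe_inf, coe_inf, he₁, he₂, Set.image_inter e.injective]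
  have hdvd : Nat.card C ∣ Nat.card (M₁' ⊓ M₂' : Subgroup G₂) := by
    rw [card_eq_of_coe_eq_image e he]
    exact card_dvd_of_le (le_inf hCM₁ hCM₂)
  have := isCyclic_of_le (inf_le_left : M₁' ⊓ M₂' ≤ M₁')
  obtain ⟨D, hD, hDC⟩ := exists_le_card_eq_of_isCyclic hdvd
  have hD₁ : C₁ = D :=
    eq_of_le_of_card_eq_of_isCyclic hCM₁' (hD.trans inf_le_left) (hC₁.trans hDC.symm)
  have hD₂ : C₂ = D :=
    eq_of_le_of_card_eq_of_isCyclic hCM₂' (hD.trans inf_le_right) (hC₂.trans hDC.symm)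
  rw [hD₁, hD₂]

theorem exists_isCyclicTransport [Finite G₁] [Finite G₂]
    (e : enhancedPowerGraph G₁ ≃g enhancedPowerGraph G₂) {m : ℕ} {C : Subgroup G₁}
    (hC : C ∈ cyclicSubgroupsOfCard G₁ m) :
    ∃ C' ∈ cyclicSubgroupsOfCard G₂ m, IsCyclicTransport e.toEquiv C C' := by
  obtain ⟨hcyc, rfl⟩ := hC
  obtain ⟨x, rfl⟩ := (C.isCyclic_iff_exists_zpowers_eq_top).mp hcyc
  obtain ⟨M, hM, hxM⟩ := exists_isMaxCyclic_le x
  obtain ⟨M', hM', he⟩ := exists_isMaxCyclic_coe_eq_image e hM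
  have := hM'.isCyclic
  have hdvd : Nat.card (zpowers x) ∣ Nat.card M' := by
    rw [card_eq_of_coe_eq_image e.toEquiv he]
    exact card_dvd_of_le hxM
  obtain ⟨C', hC'M', hC'⟩ := exists_le_card_eq_of_isCyclic hdvd
  exact ⟨C', ⟨isCyclic_of_le hC'M', hC'⟩, M, M', hM.isCyclic, hM'.isCyclic, he, hxM, hC'M'⟩

theorem ncard_cyclicSubgroupsOfCard_eq [Finite G₁] [Finite G₂]
    (e : enhancedPowerGraph G₁ ≃g enhancedPowerGraph G₂) (m : ℕ) :
    (cyclicSubgroupsOfCard G₁ m).ncard = (cyclicSubgroupsOfCard G₂ m).ncard := by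
  refine Set.ncard_eq_of_biTotal_of_biUnique (IsCyclicTransport e.toEquiv)
    (fun C hC => exists_isCyclicTransport e hC) (fun C' hC' => ?_) ?_ ?_
  · obtain ⟨C, hC, h⟩ := exists_isCyclicTransport e.symm hC'
    exact ⟨C, hC, h.symm⟩
  · rintro C ⟨-, hC⟩ C₁ ⟨-, hC₁⟩ C₂ ⟨-, hC₂⟩ h₁ h₂
    exact h₁.eq h₂ (hC₁.trans hC.symm) (hC₂.trans hC.symm)
  · rintro C₁ ⟨-, hC₁⟩ C₂ ⟨-, hC₂⟩ C' ⟨-, hC'⟩ h₁ h₂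
    exact h₁.symm.eq h₂.symm (hC₁.trans hC'.symm) (hC₂.trans hC'.symm)

end Transport

theorem stmt_8_general {G₁ G₂ : Type*} [Group G₁] [Group G₂] [Fintype G₁] [Fintype G₂]
    (e : enhancedPowerGraph G₁ ≃g enhancedPowerGraph G₂) (m : ℕ) :
    Nat.card {x : G₁ | orderOf x = m} = Nat.card {x : G₂ | orderOf x = m} := by
  rw [card_orderOf_eq_ncard_mul_totient, card_orderOf_eq_ncard_mul_totient,
    ncard_cyclicSubgroupsOfCard_eq e]

theorem stmt_8 {G₁ G₂ : Type*} [Group G₁] [Group G₂] [Fintype G₁] [Fintype G₂]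
    (e : enhancedPowerGraph G₁ ≃g enhancedPowerGraph G₂) (m : ℕ) (hm : 0 < m) :
    Nat.card {x : G₁ | orderOf x = m} = Nat.card {x : G₂ | orderOf x = m} :=
  stmt_8_general e m
end

section
/- If a finite group G has an element whose order equals the exponent of G, then the enhanced power graph of G is weakly perfect, i.e., its chromatic number equals its clique number (both equal to the exponent of G). -/
open SimpleGraph

/-! Every cyclic subgroup of `G` has order dividing `n = exp G`, hence embeds into the cyclic
group `ℤ/n`. Fixing one embedding per cyclic subgroup and colouring `g` by its image under the
embedding of `⟨g⟩` is a proper `n`-colouring: two adjacent vertices lie in a common cyclic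
subgroup, so either their orders differ, and then so do the orders of their colours, or they
generate the same subgroup and the single embedding of that subgroup separates them. An element
of order `n` generates a clique of size `n`, which gives the matching lower bound. -/

open Subgroup

theorem IsCyclic.subgroup_eq_of_card_eq_s19 {α : Type*} [Group α] [Finite α] [IsCyclic α]
    {H K : Subgroup α} (hHK : Nat.card H = Nat.card K) : H = K := by
  classical
  have := Fintype.ofFinite α
  suffices h : ∀ L : Subgroup α,
      (L : Set α).toFinset = ({a : α | a ^ Nat.card L = 1} : Finset α) by
    apply SetLike.coe_injective
    rw [← Set.toFinset_inj, h H, h K, hHK]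
  intro L
  apply Finset.eq_of_subset_of_card_le
  · intro a ha
    rw [Set.mem_toFinset, SetLike.mem_coe] at ha
    rw [Finset.mem_filter_univ]
    exact congrArg Subtype.val (pow_card_eq_one' (x := (⟨a, ha⟩ : L)))
  · rw [Set.toFinset_card, ← Nat.card_eq_fintype_card]
    exact IsCyclic.card_pow_eq_one_le Nat.card_pos

theorem zpowers_eq_zpowers_of_orderOf_eq {G : Type*} [Group G] {z g h : G}
    (hz : IsOfFinOrder z) (hg : g ∈ zpowers z) (hh : h ∈ zpowers z)
    (hgh : orderOf g = orderOf h) : zpowers g = zpowers h := by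
  have : Finite (zpowers z) := Nat.finite_of_card_ne_zero (by simpa using hz.orderOf_pos.ne')
  have hcard : Nat.card (zpowers (⟨g, hg⟩ : zpowers z)) =
      Nat.card (zpowers (⟨h, hh⟩ : zpowers z)) := by
    simpa only [Nat.card_zpowers, orderOf_mk] using hgh
  have := congrArg (map (zpowers z).subtype) (IsCyclic.subgroup_eq_of_card_eq_s19 hcard)
  simpa only [MonoidHom.map_zpowers, Subgroup.subtype_apply] using this

theorem exists_injective_monoidHom_of_card_dvd {H K : Type*} [Group H] [Group K] [IsCyclic H]
    [IsCyclic K] (hK : Nat.card K ≠ 0) (hHK : Nat.card H ∣ Nat.card K) :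
    ∃ f : H →* K, Function.Injective f := by
  obtain ⟨k, hk⟩ := IsCyclic.exists_ofOrder_eq_natCard (α := K)
  have hcard : Nat.card H = Nat.card (zpowers (k ^ (Nat.card K / Nat.card H))) := by
    rw [Nat.card_zpowers, ← hk, orderOf_pow_orderOf_div (hk ▸ hK) (hk ▸ hHK)]
  exact ⟨(zpowers _).subtype.comp (mulEquivOfCyclicCardEq hcard).toMonoidHom,
    (zpowers _).subtype_injective.comp (MulEquiv.injective _)⟩

theorem isClique_enhancedPowerGraph_zpowers {G : Type*} [Group G] (z : G) :
    (enhancedPowerGraph G).IsClique (zpowers z : Set G) :=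
  fun _ ha _ hb hab => ⟨hab, z, ha, hb⟩

theorem enhancedPowerGraph_colorable_exponent {G : Type*} [Group G]
    (hG : Monoid.exponent G ≠ 0) :
    (enhancedPowerGraph G).Colorable (Monoid.exponent G) := by
  set n := Monoid.exponent G
  have : NeZero n := ⟨hG⟩
  have hemb (C : Subgroup G) (hC : IsCyclic C) :
      ∃ f : C →* Multiplicative (ZMod n), Function.Injective f := by
    refine exists_injective_monoidHom_of_card_dvd (by simp [hG]) ?_
    rw [← IsCyclic.exponent_eq_card, Nat.card_eq_fintype_card, Fintype.card_multiplicative,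
      ZMod.card]
    exact Monoid.exponent_dvd_of_monoidHom C.subtype C.subtype_injective
  -- One embedding per cyclic subgroup rather than per element: adjacent elements of equal order
  -- generate the same subgroup, and are then told apart by the same injective map.
  choose φ hφ using hemb
  let c (g : G) : Multiplicative (ZMod n) := φ (zpowers g) inferInstance ⟨g, mem_zpowers g⟩
  have hφ_congr {C D : Subgroup G} (hCD : C = D) (hC : IsCyclic C) (hD : IsCyclic D) {g : G}
      (hgC : g ∈ C) (hgD : g ∈ D) : φ C hC ⟨g, hgC⟩ = φ D hD ⟨g, hgD⟩ := by
    subst hCD; rfl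
  have horder (g : G) : orderOf (c g) = orderOf g := by
    rw [orderOf_injective _ (hφ _ _), orderOf_mk]
  have hproper {g h : G} (hadj : (enhancedPowerGraph G).Adj g h) : c g ≠ c h := by
    obtain ⟨hne, z, hgz, hhz⟩ := hadj
    intro hc
    by_cases hgh : orderOf g = orderOf h
    · have hzp := zpowers_eq_zpowers_of_orderOf_eq
        (Monoid.exponent_ne_zero.mp hG).isOfFinOrder hgz hhz hgh
      have hh : h ∈ zpowers g := hzp ▸ mem_zpowers h
      rw [show c h = φ (zpowers g) inferInstance ⟨h, hh⟩ from hφ_congr hzp.symm _ _ _ _] at hc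
      exact hne (congrArg Subtype.val (hφ _ _ hc))
    · exact hgh (by rw [← horder, ← horder, hc])
  simpa using (Coloring.mk c hproper).colorable

theorem stmt_19 {G : Type*} [Group G] [Fintype G] (x : G)
    (hx : orderOf x = Monoid.exponent G) :
    (enhancedPowerGraph G).chromaticNumber = ((enhancedPowerGraph G).cliqueNum : ℕ∞) ∧
    (enhancedPowerGraph G).cliqueNum = Monoid.exponent G ∧
    (enhancedPowerGraph G).chromaticNumber = (Monoid.exponent G : ℕ∞) := by
  classical
  have hcol := enhancedPowerGraph_colorable_exponent (Monoid.exponent_ne_zero_of_finite (G := G))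
  have hclique := isClique_enhancedPowerGraph_zpowers x
  rw [← Set.coe_toFinset (zpowers x : Set G)] at hclique
  have hcard : (zpowers x : Set G).toFinset.card = Monoid.exponent G := by
    rw [Set.toFinset_card, ← Nat.card_eq_fintype_card, SetLike.coe_sort_coe, Nat.card_zpowers, hx]
  have hcliqueNum : (enhancedPowerGraph G).cliqueNum = Monoid.exponent G := by
    refine le_antisymm ?_ (hcard ▸ hclique.card_le_cliqueNum)
    exact_mod_cast
      (enhancedPowerGraph G).cliqueNum_le_chromaticNumber.trans hcol.chromaticNumber_le
  have hchromatic : (enhancedPowerGraph G).chromaticNumber = Monoid.exponent G :=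
    le_antisymm hcol.chromaticNumber_le (hcard ▸ hclique.card_le_chromaticNumber)
  exact ⟨by rw [hchromatic, hcliqueNum], hcliqueNum, hchromatic⟩
end
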